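/- arXiv:2107.13794 — 2 statements merged into one kernel-verified Lean document; each statement's English description precedes it below -/
import Mathlib

section
/- Let A(t) be an invertible matrix-valued differentiable function of t and ν a unit vector. Define w_t := det(A(t)) · ‖A(t)^{-⊤} ν‖ with A(0) = I. Then d/dt w_t |_{t=0} = tr(A'(0)) − (A'(0) ν)·ν. -/
open Matrix

attribute [local instance] Matrix.normedAddCommGroup Matrix.normedSpace

/-- Euclidean norm on `Fin d → ℝ`. -/
noncomputable def nrm {d : ℕ} (v : Fin d → ℝ) : ℝ := Real.sqrt (v ⬝ᵥ v)

/-!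
At `t = 0` the product rule splits the derivative into two terms. Jacobi's formula at the
identity gives `(det A)' = tr A'`. Since `(A⁻¹)' = -A'` at the identity, the vector
`A(t)⁻ᵀ ν = ν ᵥ* A(t)⁻¹` has derivative `-(ν ᵥ* A')`, and the Euclidean norm at the unit
vector `ν` has derivative `w ↦ ν ⬝ᵥ w`, which contributes `-(A' ν ⬝ᵥ ν)`.
-/

section

variable {𝕜 : Type*} [NontriviallyNormedField 𝕜] {n : Type*} [Fintype n]

theorem HasDerivAt.dotProduct {v w : 𝕜 → n → 𝕜} {v' w' : n → 𝕜} {x : 𝕜}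
    (hv : HasDerivAt v v' x) (hw : HasDerivAt w w' x) :
    HasDerivAt (fun t => v t ⬝ᵥ w t) (v' ⬝ᵥ w x + v x ⬝ᵥ w') x := by
  simp only [_root_.dotProduct, ← Finset.sum_add_distrib]
  exact HasDerivAt.fun_sum fun i _ => (hasDerivAt_pi.mp hv i).mul (hasDerivAt_pi.mp hw i)

theorem HasDerivAt.const_vecMul (ν : n → 𝕜) {B : 𝕜 → Matrix n n 𝕜} {B' : Matrix n n 𝕜} {x : 𝕜}
    (h : HasDerivAt B B' x) : HasDerivAt (fun t => ν ᵥ* B t) (ν ᵥ* B') x := by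
  refine hasDerivAt_pi.mpr fun j => ?_
  have hcol : HasDerivAt (fun t i => B t i j) (fun i => B' i j) x :=
    hasDerivAt_pi.mpr fun i => hasDerivAt_pi.mp (hasDerivAt_pi.mp h i) j
  simpa [vecMul] using (hasDerivAt_const x ν).dotProduct hcol

theorem HasDerivAt.ringInverse {R : Type*} [NormedRing R] [NormedAlgebra 𝕜 R]
    [HasSummableGeomSeries R] {f : 𝕜 → R} {f' : R} {x : 𝕜} (hf : HasDerivAt f f' x) (u : Rˣ)
    (hu : f x = u) :
    HasDerivAt (fun t => Ring.inverse (f t)) (-(↑u⁻¹ * f' * ↑u⁻¹)) x := by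
  simpa [Function.comp_def] using
    (hasFDerivAt_ringInverse (𝕜 := 𝕜) u).comp_hasDerivAt_of_eq x hf hu.symm

variable [DecidableEq n]

theorem Matrix.hasDerivAt_det_one_add_smul (M : Matrix n n 𝕜) :
    HasDerivAt (fun r : 𝕜 => (1 + r • M).det) M.trace 0 := by
  open Polynomial in
  have hpoly : (fun r : 𝕜 => (1 + r • M).det) =
      fun r => (det (1 + (X : 𝕜[X]) • M.map C)).eval r := by
    ext r
    rw [← coe_evalRingHom, RingHom.map_det]
    congr 1
    ext i j
    by_cases hij : i = j <;> simp [hij] <;> ring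
  rw [hpoly, ← derivative_det_one_add_X_smul]
  exact Polynomial.hasDerivAt _ _

theorem Matrix.differentiable_det : Differentiable 𝕜 (det : Matrix n n 𝕜 → 𝕜) := by
  simp only [funext det_apply']
  fun_prop

theorem HasDerivAt.det_of_eq_one {B : 𝕜 → Matrix n n 𝕜} {B' : Matrix n n 𝕜} {x : 𝕜}
    (h : HasDerivAt B B' x) (hx : B x = 1) : HasDerivAt (fun t => (B t).det) B'.trace x := by
  have hdet := (differentiable_det (𝕜 := 𝕜) (n := n) 1).hasFDerivAt
  have hline : HasDerivAt (fun r : 𝕜 => 1 + r • B') B' 0 :=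
    (((hasDerivAt_id 0).smul_const B').const_add 1).congr_deriv (one_smul _ _)
  have hval : fderiv 𝕜 det (1 : Matrix n n 𝕜) B' = B'.trace :=
    (hdet.comp_hasDerivAt_of_eq 0 hline (by simp)).unique (hasDerivAt_det_one_add_smul B')
  exact hval ▸ hdet.comp_hasDerivAt_of_eq x h hx.symm

end

theorem HasDerivAt.matrix_inv {𝕜 : Type*} [RCLike 𝕜] {n : Type*} [Fintype n] [DecidableEq n]
    {B : 𝕜 → Matrix n n 𝕜} {B' : Matrix n n 𝕜} {x : 𝕜} (h : HasDerivAt B B' x)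
    (hx : IsUnit (B x)) :
    HasDerivAt (fun t => (B t)⁻¹) (-((B x)⁻¹ * B' * (B x)⁻¹)) x := by
  rw [show (B x)⁻¹ = ↑hx.unit⁻¹ by
    rw [← Ring.inverse_unit, hx.unit_spec, nonsing_inv_eq_ringInverse]]
  simp only [nonsing_inv_eq_ringInverse]
  -- The operator norm makes the matrices a complete normed algebra; its topology is the
  -- entrywise one, so the statement does not depend on the choice of norm.
  open scoped Matrix.Norms.Operator in
  exact h.ringInverse hx.unit hx.unit_spec

theorem HasDerivAt.nrm {d : ℕ} {v : ℝ → Fin d → ℝ} {v' : Fin d → ℝ} {x : ℝ}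
    (hv : HasDerivAt v v' x) (hx : v x ≠ 0) :
    HasDerivAt (fun t => nrm (v t)) ((v x ⬝ᵥ v') / nrm (v x)) x := by
  have hsq := (hv.dotProduct hv).sqrt (mt dotProduct_self_eq_zero.mp hx)
  unfold _root_.nrm
  convert hsq using 1
  rw [dotProduct_comm v']
  ring

theorem stmt7_general (d : ℕ) (A : ℝ → Matrix (Fin d) (Fin d) ℝ)
    (A' : Matrix (Fin d) (Fin d) ℝ)
    (hA0 : A 0 = 1) (hA : HasDerivAt A A' 0)
    (ν : Fin d → ℝ) (hν : ν ⬝ᵥ ν = 1) :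
    HasDerivAt (fun t => (A t).det * nrm (((A t)ᵀ)⁻¹ *ᵥ ν))
      (A'.trace - (A' *ᵥ ν) ⬝ᵥ ν) 0 := by
  simp only [← transpose_nonsing_inv, mulVec_transpose]
  have hv : HasDerivAt (fun t => ν ᵥ* (A t)⁻¹) (-(ν ᵥ* A')) 0 := by
    simpa [hA0, vecMul_neg] using (hA.matrix_inv (hA0 ▸ isUnit_one)).const_vecMul ν
  have hν0 : ν ≠ 0 := by rintro rfl; simp at hν
  have hnrm : nrm ν = 1 := by rw [nrm, hν, Real.sqrt_one]
  refine ((hA.det_of_eq_one hA0).fun_mul (hv.nrm (by simpa [hA0] using hν0))).congr_deriv ?_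
  simp only [hA0, inv_one, vecMul_one, hnrm, det_one, dotProduct_neg, dotProduct_comm ν (ν ᵥ* A'),
    ← dotProduct_mulVec, dotProduct_comm ν (A' *ᵥ ν)]
  ring

theorem stmt7 (d : ℕ) (A : ℝ → Matrix (Fin d) (Fin d) ℝ)
    (A' : Matrix (Fin d) (Fin d) ℝ)
    (hdiff : Differentiable ℝ A) (hinv : ∀ t, IsUnit (A t).det)
    (hA0 : A 0 = 1) (hA : HasDerivAt A A' 0)
    (ν : Fin d → ℝ) (hν : ν ⬝ᵥ ν = 1) :
    HasDerivAt (fun t => (A t).det * nrm (((A t)ᵀ)⁻¹ *ᵥ ν))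
      (A'.trace - (A' *ᵥ ν) ⬝ᵥ ν) 0 :=
  stmt7_general d A A' hA0 hA ν hν
end

section
/- Let ν, τ ∈ ℝ³ be orthonormal and μ = ν × τ, so (ν, τ, μ) is a positively oriented orthonormal frame. Let F be an invertible 3×3 matrix with det F > 0, and define ν^F, τ^F, μ^F := A μ/‖Aμ‖ as above with A = (I − ν^F⊗ν^F)F^{-⊤}. Then det(ν^F, τ^F, μ^F) = det(F^{-⊤}) ‖Fτ‖ / (‖F^{-⊤}ν‖ ‖Aμ‖) > 0; in particular (ν^F, τ^F, μ^F) is positively oriented, hence μ^F = ν^F × τ^F. -/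
/-!
Since `⟪F⁻ᵀu, Fw⟫ = ⟪u, w⟫`, the vectors `ν^F` and `τ^F` are orthogonal, and `A` is `F⁻ᵀ`
followed by the orthogonal projection away from `ν^F`; hence `(ν^F, τ^F, μ^F)` is orthonormal.
In the triple product the `ν^F`-component removed by the projection drops out, leaving
`det(F⁻ᵀν, Fτ, F⁻ᵀμ)`. Writing `Fτ = F⁻ᵀ(FᵀFτ)` this equals
`det F⁻ᵀ · det(ν, FᵀFτ, ν × τ) = det F⁻ᵀ · ‖Fτ‖²`. An orthonormal triple has triple product `±1`,
so positivity forces `μ^F = ν^F × τ^F`.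
-/

open Matrix
open scoped Matrix

lemma nrm_sq {d : ℕ} (v : Fin d → ℝ) : nrm v ^ 2 = v ⬝ᵥ v :=
  Real.sq_sqrt (by simpa using dotProduct_star_self_nonneg v)

lemma nrm_pos {d : ℕ} {v : Fin d → ℝ} (hv : v ≠ 0) : 0 < nrm v :=
  Real.sqrt_pos.2 <| (by simpa using dotProduct_star_self_nonneg v : (0 : ℝ) ≤ v ⬝ᵥ v).lt_of_ne'
    (mt dotProduct_self_eq_zero.1 hv)

lemma dotProduct_self_inv_nrm_smul {d : ℕ} {v : Fin d → ℝ} (hv : v ≠ 0) :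
    ((nrm v)⁻¹ • v) ⬝ᵥ ((nrm v)⁻¹ • v) = 1 := by
  have := nrm_pos hv
  rw [smul_dotProduct, dotProduct_smul, ← nrm_sq, smul_eq_mul, smul_eq_mul]
  field_simp

section DotProduct

variable {n R : Type*} [Fintype n] [CommRing R]

lemma inv_transpose_mulVec_dotProduct_mulVec [DecidableEq n] {F : Matrix n n R}
    (hF : IsUnit F.det) (u w : n → R) : ((Fᵀ)⁻¹ *ᵥ u) ⬝ᵥ (F *ᵥ w) = u ⬝ᵥ w := by
  rw [dotProduct_mulVec, ← mulVec_transpose, mulVec_mulVec,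
    mul_nonsing_inv _ (isUnit_det_transpose F hF), one_mulVec]

lemma one_sub_vecMulVec_mulVec [DecidableEq n] (u x : n → R) :
    (1 - vecMulVec u u) *ᵥ x = x - (u ⬝ᵥ x) • u := by
  rw [sub_mulVec, one_mulVec, vecMulVec_mulVec, op_smul_eq_smul]

lemma dotProduct_sub_dotProduct_smul_self {u : n → R} (hu : u ⬝ᵥ u = 1) (x : n → R) :
    u ⬝ᵥ (x - (u ⬝ᵥ x) • u) = 0 := by
  rw [dotProduct_sub, dotProduct_smul, hu, smul_eq_mul, mul_one, sub_self]

lemma dotProduct_sub_smul_of_dotProduct_eq_zero {u y : n → R} (hyu : y ⬝ᵥ u = 0) (x : n → R)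
    (t : R) : y ⬝ᵥ (x - t • u) = y ⬝ᵥ x := by
  rw [dotProduct_sub, dotProduct_smul, hyu, smul_zero, sub_zero]

lemma det_inv_transpose_pos [DecidableEq n] {F : Matrix n n ℝ} (hF : 0 < F.det) :
    0 < ((Fᵀ)⁻¹).det := by
  rw [det_nonsing_inv, Ring.inverse_eq_inv', det_transpose]
  positivity

end DotProduct

section TripleProduct

variable {R : Type*} [CommRing R]

lemma det_of_columns_eq_triple_product (u v w : Fin 3 → R) :
    det (of fun i j => ![u, v, w] j i) = u ⬝ᵥ (v ⨯₃ w) := by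
  rw [triple_product_eq_det, ← det_transpose]
  rfl

lemma triple_product_smul (x y z : Fin 3 → R) (p q r : R) :
    (p • x) ⬝ᵥ ((q • y) ⨯₃ (r • z)) = p * q * r * x ⬝ᵥ (y ⨯₃ z) := by
  simp only [map_smul, LinearMap.smul_apply, smul_dotProduct, dotProduct_smul, smul_eq_mul]
  ring

lemma triple_product_sub_smul (x y z : Fin 3 → R) (t : R) :
    x ⬝ᵥ (y ⨯₃ (z - t • x)) = x ⬝ᵥ (y ⨯₃ z) := by
  rw [map_sub, map_smul, dotProduct_sub, dotProduct_smul, dot_cross_self, smul_zero, sub_zero]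

lemma triple_product_mulVec (M : Matrix (Fin 3) (Fin 3) R) (x y z : Fin 3 → R) :
    (M *ᵥ x) ⬝ᵥ ((M *ᵥ y) ⨯₃ (M *ᵥ z)) = M.det * x ⬝ᵥ (y ⨯₃ z) := by
  have hrows : of ![M *ᵥ x, M *ᵥ y, M *ᵥ z] = of ![x, y, z] * Mᵀ := by
    ext i j
    fin_cases i <;> simp [mul_apply, mulVec, dotProduct, mul_comm]
  rw [triple_product_eq_det, triple_product_eq_det]
  change (of ![M *ᵥ x, M *ᵥ y, M *ᵥ z]).det = M.det * (of ![x, y, z]).det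
  rw [hrows, det_mul, det_transpose, mul_comm]

lemma inv_transpose_triple_product {F : Matrix (Fin 3) (Fin 3) R} (hF : IsUnit F.det)
    {ν τ : Fin 3 → R} (hν : ν ⬝ᵥ ν = 1) (hντ : ν ⬝ᵥ τ = 0) :
    ((Fᵀ)⁻¹ *ᵥ ν) ⬝ᵥ ((F *ᵥ τ) ⨯₃ ((Fᵀ)⁻¹ *ᵥ (ν ⨯₃ τ))) =
      ((Fᵀ)⁻¹).det * (F *ᵥ τ) ⬝ᵥ (F *ᵥ τ) := by
  have hFτ : F *ᵥ τ = (Fᵀ)⁻¹ *ᵥ (Fᵀ *ᵥ (F *ᵥ τ)) := by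
    rw [mulVec_mulVec, nonsing_inv_mul _ (isUnit_det_transpose F hF), one_mulVec]
  conv_lhs => rw [hFτ]
  rw [triple_product_mulVec, cross_cross_eq_smul_sub_smul', dotProduct_sub, dotProduct_smul,
    dotProduct_smul, hν, hντ, smul_eq_mul, smul_eq_mul, mul_one, mul_zero, sub_zero,
    mulVec_transpose, ← dotProduct_mulVec]

end TripleProduct

section Orthonormal

variable {u v w : Fin 3 → ℝ}

lemma triple_product_sq_eq_one_of_orthonormal (hu : u ⬝ᵥ u = 1) (hv : v ⬝ᵥ v = 1)
    (hw : w ⬝ᵥ w = 1) (huv : u ⬝ᵥ v = 0) (huw : u ⬝ᵥ w = 0) (hvw : v ⬝ᵥ w = 0) :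
    (u ⬝ᵥ (v ⨯₃ w)) ^ 2 = 1 := by
  have hgram : of ![u, v, w] * (of ![u, v, w])ᵀ = 1 := by
    have hrow : ∀ i, of ![u, v, w] i = ![u, v, w] i := fun _ => rfl
    ext i j
    fin_cases i <;> fin_cases j <;>
      simp [mul_apply', hrow, dotProduct_comm, hu, hv, hw, huv, huw, hvw]
  rw [triple_product_eq_det]
  change (of ![u, v, w]).det ^ 2 = 1
  rw [sq]
  nth_rewrite 2 [← det_transpose]
  rw [← det_mul, hgram, det_one]

lemma eq_cross_of_orthonormal_of_triple_product_pos (hu : u ⬝ᵥ u = 1) (hv : v ⬝ᵥ v = 1)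
    (hw : w ⬝ᵥ w = 1) (huv : u ⬝ᵥ v = 0) (huw : u ⬝ᵥ w = 0) (hvw : v ⬝ᵥ w = 0)
    (hpos : 0 < u ⬝ᵥ (v ⨯₃ w)) : w = u ⨯₃ v := by
  have htriple : w ⬝ᵥ (u ⨯₃ v) = 1 := by
    have hsq := triple_product_sq_eq_one_of_orthonormal hu hv hw huv huw hvw
    rw [triple_product_permutation, triple_product_permutation] at hpos hsq
    nlinarith
  have hcross : (u ⨯₃ v) ⬝ᵥ (u ⨯₃ v) = 1 := by
    rw [cross_dot_cross, hu, hv, huv, dotProduct_comm v u, huv]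
    ring
  have hdist : (w - u ⨯₃ v) ⬝ᵥ (w - u ⨯₃ v) = 0 := by
    rw [sub_dotProduct, dotProduct_sub, dotProduct_sub, hw, htriple, dotProduct_comm _ w, htriple,
      hcross]
    ring
  exact sub_eq_zero.1 (dotProduct_self_eq_zero.1 hdist)

end Orthonormal

section Projection

variable {R : Type*} [CommRing R] {F A : Matrix (Fin 3) (Fin 3) R} {ν τ νF : Fin 3 → R} {c : R}

lemma inv_transpose_triple_product_of_projection (hF : IsUnit F.det) (hν : ν ⬝ᵥ ν = 1)
    (hντ : ν ⬝ᵥ τ = 0) (hνF : νF = c • ((Fᵀ)⁻¹ *ᵥ ν))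
    (hA : A = (1 - vecMulVec νF νF) * (Fᵀ)⁻¹) :
    ((Fᵀ)⁻¹ *ᵥ ν) ⬝ᵥ ((F *ᵥ τ) ⨯₃ (A *ᵥ (ν ⨯₃ τ))) =
      ((Fᵀ)⁻¹).det * (F *ᵥ τ) ⬝ᵥ (F *ᵥ τ) := by
  rw [hA, ← mulVec_mulVec, one_sub_vecMulVec_mulVec, hνF, smul_smul, triple_product_sub_smul,
    inv_transpose_triple_product hF hν hντ]

lemma mulVec_dotProduct_projection_cross_eq_zero (hF : IsUnit F.det) (hντ : ν ⬝ᵥ τ = 0)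
    (hνF : νF = c • ((Fᵀ)⁻¹ *ᵥ ν)) (hA : A = (1 - vecMulVec νF νF) * (Fᵀ)⁻¹) :
    (F *ᵥ τ) ⬝ᵥ (A *ᵥ (ν ⨯₃ τ)) = 0 := by
  have hdual := inv_transpose_mulVec_dotProduct_mulVec hF
  have hτνF : (F *ᵥ τ) ⬝ᵥ νF = 0 := by
    rw [hνF, dotProduct_smul, dotProduct_comm, hdual, hντ, smul_zero]
  rw [hA, ← mulVec_mulVec, one_sub_vecMulVec_mulVec,
    dotProduct_sub_smul_of_dotProduct_eq_zero hτνF, dotProduct_comm, hdual, dotProduct_comm,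
    dot_cross_self]

end Projection

theorem stmt9 (ν τ : Fin 3 → ℝ) (hν : ν ⬝ᵥ ν = 1) (hτ : τ ⬝ᵥ τ = 1)
    (hortho : ν ⬝ᵥ τ = 0) (μ : Fin 3 → ℝ) (hμ : μ = ν ⨯₃ τ)
    (F : Matrix (Fin 3) (Fin 3) ℝ) (hF : 0 < F.det)
    (νF τF μF : Fin 3 → ℝ) (A : Matrix (Fin 3) (Fin 3) ℝ)
    (hνF : νF = (nrm ((Fᵀ)⁻¹ *ᵥ ν))⁻¹ • ((Fᵀ)⁻¹ *ᵥ ν))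
    (hτF : τF = (nrm (F *ᵥ τ))⁻¹ • (F *ᵥ τ))
    (hA : A = (1 - vecMulVec νF νF) * (Fᵀ)⁻¹)
    (hAμ : A *ᵥ μ ≠ 0)
    (hμF : μF = (nrm (A *ᵥ μ))⁻¹ • (A *ᵥ μ)) :
    Matrix.det (Matrix.of fun i j => ![νF, τF, μF] j i) =
      ((Fᵀ)⁻¹).det * nrm (F *ᵥ τ) / (nrm ((Fᵀ)⁻¹ *ᵥ ν) * nrm (A *ᵥ μ)) ∧
    0 < Matrix.det (Matrix.of fun i j => ![νF, τF, μF] j i) ∧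
    μF = νF ⨯₃ τF := by
  subst hμ
  have hFu : IsUnit F.det := hF.ne'.isUnit
  have hdual := inv_transpose_mulVec_dotProduct_mulVec hFu
  have hBν : (Fᵀ)⁻¹ *ᵥ ν ≠ 0 := fun h => by simpa [h, hν] using hdual ν ν
  have hFτ : F *ᵥ τ ≠ 0 := fun h => by simpa [h, hτ] using hdual τ τ
  have hνF1 : νF ⬝ᵥ νF = 1 := hνF ▸ dotProduct_self_inv_nrm_smul hBν
  have hντF : νF ⬝ᵥ τF = 0 := by
    rw [hνF, hτF, smul_dotProduct, dotProduct_smul, hdual, hortho, smul_zero, smul_zero]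
  have hνμF : νF ⬝ᵥ μF = 0 := by
    rw [hμF, dotProduct_smul, hA, ← mulVec_mulVec, one_sub_vecMulVec_mulVec,
      dotProduct_sub_dotProduct_smul_self hνF1, smul_zero]
  have hτμF : τF ⬝ᵥ μF = 0 := by
    rw [hμF, hτF, smul_dotProduct, dotProduct_smul,
      mulVec_dotProduct_projection_cross_eq_zero hFu hortho hνF hA, smul_zero, smul_zero]
  have ha := nrm_pos hBν
  have hb := nrm_pos hFτ
  have hc := nrm_pos hAμ
  have hval : νF ⬝ᵥ (τF ⨯₃ μF) =
      ((Fᵀ)⁻¹).det * nrm (F *ᵥ τ) / (nrm ((Fᵀ)⁻¹ *ᵥ ν) * nrm (A *ᵥ (ν ⨯₃ τ))) := by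
    rw [hνF, hτF, hμF, triple_product_smul,
      inv_transpose_triple_product_of_projection hFu hν hortho hνF hA, ← nrm_sq]
    field_simp
  have hpos : 0 < νF ⬝ᵥ (τF ⨯₃ μF) := hval ▸ by have := det_inv_transpose_pos hF; positivity
  rw [det_of_columns_eq_triple_product]
  exact ⟨hval, hpos, eq_cross_of_orthonormal_of_triple_product_pos hνF1
    (hτF ▸ dotProduct_self_inv_nrm_smul hFτ) (hμF ▸ dotProduct_self_inv_nrm_smul hAμ) hντF hνμF
    hτμF hpos⟩
end
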